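/- In the CFI gadget X₃ (inner vertices m_i indexed by even-weight vectors i ∈ {0,1}³, outer vertex pairs {a_j, b_j} for j = 1,2,3, with m_i adjacent to a_j if i_j = 0 and to b_j if i_j = 1), a permutation of the outer vertices that maps each pair {a_j, b_j} to itself extends to an automorphism of X₃ if and only if the number of pairs it swaps is even. -/

import Mathlib

/-- Vertices of the CFI gadget `X₃`: inner vertices are the even-weight vectors
in `{0,1}³`, outer vertices are pairs `(j, b)` with `(j, false) = a_j`, `(j, true) = b_j`. -/
def CFIVertex : Type :=
  {i : Fin 3 → Bool // Even (Finset.univ.filter (fun j => i j = true)).card} ⊕ (Fin 3 × Bool)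

/-- The CFI gadget `X₃`: the inner vertex `m_i` is adjacent to the outer vertex
`a_j` if `i_j = 0` and to `b_j` if `i_j = 1`. -/
def cfiGadget : SimpleGraph CFIVertex :=
  SimpleGraph.fromRel (fun x y =>
    match x, y with
    | Sum.inl i, Sum.inr (j, b) => i.val j = b
    | _, _ => False)

/-! An automorphism acting on the outer vertices by the pattern `ε` must send the
inner vertex `m_0` to an inner vertex adjacent to every `σ a_j`, i.e. to `m_ε`, so `ε` has even
weight. Conversely, for even `ε` the map `m_i ↦ m_{i ⊕ ε}` is well defined because weights add
modulo 2 under `⊕`, and together with the prescribed action on the outer vertices it preserves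
every incidence `i_j = b ↔ i_j ⊕ ε_j = b ⊕ ε_j`. -/

section Parity

variable {ι : Type*} [Fintype ι]

theorem card_filter_xor_add_two_mul (ε i : ι → Bool) :
    (Finset.univ.filter (fun j => xor (ε j) (i j) = true)).card
        + 2 * (Finset.univ.filter (fun j => (ε j && i j) = true)).card =
      (Finset.univ.filter (fun j => ε j = true)).card
        + (Finset.univ.filter (fun j => i j = true)).card := by
  simp only [Finset.card_filter, Finset.mul_sum, ← Finset.sum_add_distrib]
  refine Finset.sum_congr rfl fun j _ => ?_
  cases ε j <;> cases i j <;> rfl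

theorem even_card_filter_xor_iff (ε i : ι → Bool) :
    Even (Finset.univ.filter (fun j => xor (ε j) (i j) = true)).card ↔
      (Even (Finset.univ.filter (fun j => ε j = true)).card ↔
        Even (Finset.univ.filter (fun j => i j = true)).card) := by
  rw [← Nat.even_add, ← card_filter_xor_add_two_mul, Nat.even_add,
    iff_true_intro (even_two_mul _), iff_true]

end Parity

abbrev CFIInner : Type :=
  {i : Fin 3 → Bool // Even (Finset.univ.filter (fun j => i j = true)).card}

theorem cfiGadget_adj_inl_inr (i : CFIInner) (j : Fin 3) (b : Bool) :
    cfiGadget.Adj (Sum.inl i) (Sum.inr (j, b)) ↔ i.val j = b :=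
  (SimpleGraph.fromRel_adj _ _ _).trans
    ⟨fun h => h.2.resolve_right id, fun h => ⟨Sum.inl_ne_inr, .inl h⟩⟩

theorem cfiGadget_not_adj_inl_inl (i k : CFIInner) :
    ¬ cfiGadget.Adj (Sum.inl i) (Sum.inl k) := fun h =>
  ((SimpleGraph.fromRel_adj _ _ _).1 h).2.elim id id

theorem cfiGadget_not_adj_inr_inr (p q : Fin 3 × Bool) :
    ¬ cfiGadget.Adj (Sum.inr p) (Sum.inr q) := fun h =>
  ((SimpleGraph.fromRel_adj _ _ _).1 h).2.elim id id

theorem cfiGadget_exists_inl_of_adj_inr {x : CFIVertex} {p : Fin 3 × Bool}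
    (h : cfiGadget.Adj x (Sum.inr p)) : ∃ k, x = Sum.inl k := by
  rcases x with k | q
  · exact ⟨k, rfl⟩
  · exact absurd h (cfiGadget_not_adj_inr_inr q p)

def CFIInner.flip (ε : Fin 3 → Bool) (hε : Even (Finset.univ.filter (fun j => ε j = true)).card)
    (i : CFIInner) : CFIInner :=
  ⟨fun j => xor (ε j) (i.val j), (even_card_filter_xor_iff ε i.val).2 (iff_of_true hε i.property)⟩

def cfiFlip (ε : Fin 3 → Bool) (hε : Even (Finset.univ.filter (fun j => ε j = true)).card) :
    CFIVertex → CFIVertex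
  | Sum.inl i => Sum.inl (CFIInner.flip ε hε i)
  | Sum.inr (j, b) => Sum.inr (j, xor (ε j) b)

section Flip

variable (ε : Fin 3 → Bool) (hε : Even (Finset.univ.filter (fun j => ε j = true)).card)

theorem cfiFlip_involutive : Function.Involutive (cfiFlip ε hε) := by
  rintro (i | ⟨j, b⟩)
  · exact congrArg Sum.inl (Subtype.ext (funext fun j => by simp [CFIInner.flip]))
  · exact congrArg Sum.inr (Prod.ext rfl (by simp))

theorem cfiFlip_adj_iff (x y : CFIVertex) :
    cfiGadget.Adj (cfiFlip ε hε x) (cfiFlip ε hε y) ↔ cfiGadget.Adj x y := by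
  have inl_inr (i : CFIInner) (j : Fin 3) (b : Bool) :
      cfiGadget.Adj (cfiFlip ε hε (Sum.inl i)) (cfiFlip ε hε (Sum.inr (j, b))) ↔
        cfiGadget.Adj (Sum.inl i) (Sum.inr (j, b)) := by
    simp only [cfiFlip, cfiGadget_adj_inl_inr, CFIInner.flip, Bool.xor_right_inj]
  rcases x with i | ⟨j, b⟩ <;> rcases y with k | ⟨j', b'⟩
  · exact iff_of_false (cfiGadget_not_adj_inl_inl _ _) (cfiGadget_not_adj_inl_inl _ _)
  · exact inl_inr i j' b'
  · exact cfiGadget.adj_comm _ _ |>.trans <| (inl_inr k j b).trans <| cfiGadget.adj_comm _ _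
  · exact iff_of_false (cfiGadget_not_adj_inr_inr _ _) (cfiGadget_not_adj_inr_inr _ _)

def cfiFlipIso : cfiGadget ≃g cfiGadget where
  toEquiv := (cfiFlip_involutive ε hε).toPerm
  map_rel_iff' := cfiFlip_adj_iff ε hε _ _

end Flip

theorem even_of_cfiGadget_automorphism (ε : Fin 3 → Bool) (σ : Equiv.Perm CFIVertex)
    (hσ : ∀ x y, cfiGadget.Adj (σ x) (σ y) ↔ cfiGadget.Adj x y)
    (hout : ∀ (j : Fin 3) (b : Bool), σ (Sum.inr (j, b)) = Sum.inr (j, xor (ε j) b)) :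
    Even (Finset.univ.filter (fun j => ε j = true)).card := by
  let m₀ : CFIInner := ⟨fun _ => false, by decide⟩
  have hadj (j : Fin 3) : cfiGadget.Adj (σ (Sum.inl m₀)) (Sum.inr (j, ε j)) := by
    simpa [hout] using (hσ (Sum.inl m₀) (Sum.inr (j, false))).2
      ((cfiGadget_adj_inl_inr m₀ j false).2 rfl)
  obtain ⟨k, hk⟩ := cfiGadget_exists_inl_of_adj_inr (hadj 0)
  have hkε : k.val = ε := funext fun j => (cfiGadget_adj_inl_inr k j _).1 (hk ▸ hadj j)
  exact hkε ▸ k.property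

/-- A permutation of the outer vertices of `X₃` fixing each pair `{a_j, b_j}` setwise
(swapping exactly the pairs `j` with `ε j = true`) extends to an automorphism of `X₃`
iff it swaps an even number of pairs. -/
theorem cfiGadget_extension_iff_even (ε : Fin 3 → Bool) :
    (∃ σ : Equiv.Perm CFIVertex,
      (∀ x y, cfiGadget.Adj (σ x) (σ y) ↔ cfiGadget.Adj x y) ∧
      ∀ (j : Fin 3) (b : Bool), σ (Sum.inr (j, b)) = Sum.inr (j, xor (ε j) b)) ↔
    Even (Finset.univ.filter (fun j => ε j = true)).card := by
  refine ⟨fun ⟨σ, hσ, hout⟩ => even_of_cfiGadget_automorphism ε σ hσ hout, fun hε => ?_⟩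
  exact ⟨(cfiFlipIso ε hε).toEquiv, fun _ _ => (cfiFlipIso ε hε).map_adj_iff, fun _ _ => rfl⟩
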